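/- Let ν, L, T > 0, let f_norm ≥ 0, and let e, w : [0,T] → ℝ be nonnegative functions with e continuous on [0,T] and differentiable on (0,T) and w integrable, such that for every t ∈ (0,T), (1/2)·e′(t) ≤ −ν·w(t) + f_norm·√(e(t)). Define U₀ ≥ 0 by U₀² = L^{−3}·(1/T)∫₀^T e(t) dt, and set f_rms = L^{−3/2}·f_norm, Gr = L³·f_rms·ν^{−2}, Re = U₀·L·ν^{−1}, and ϖ₀ = ν·L^{−2}. Then L^{−3}·(1/T)∫₀^T w(t) dt ≤ ϖ₀²·Gr·Re + e(0)/(2·ν·L³·T). -/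

import Mathlib

open MeasureTheory

/-!
Integrating the energy inequality over `[0, T]` and discarding `e T ≥ 0` gives
`ν ⟨w⟩_T ≤ f_norm ⟨√e⟩_T + e 0 / (2T)`. By Jensen's inequality for the concave square root,
`⟨√e⟩_T ≤ √⟨e⟩_T = L^{3/2} U₀`, and the dimensionless groups combine to
`ϖ₀² Gr Re = L^{-3/2} f_norm U₀ / ν`.
-/

theorem interval_average_sqrt_le {e : ℝ → ℝ} {a b : ℝ} (hab : a < b)
    (he : ContinuousOn e (Set.Icc a b)) (he_nonneg : ∀ t ∈ Set.Icc a b, 0 ≤ e t) :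
    (⨍ t in a..b, √(e t)) ≤ √(⨍ t in a..b, e t) := by
  have hIoc : Set.uIoc a b ⊆ Set.Icc a b := by
    rw [Set.uIoc_of_le hab.le]; exact Set.Ioc_subset_Icc_self
  have hint : IntegrableOn e (Set.uIoc a b) :=
    (he.integrableOn_Icc).mono_set hIoc
  have hsqrt_int : IntegrableOn (fun t => √(e t)) (Set.uIoc a b) :=
    ((Real.continuous_sqrt.comp_continuousOn he).integrableOn_Icc).mono_set hIoc
  refine Real.strictConcaveOn_sqrt.concaveOn.le_map_set_average
    Real.continuous_sqrt.continuousOn isClosed_Ici ?_ ?_ ?_ hint hsqrt_int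
  · simp [Set.uIoc_of_le hab.le, hab]
  · simp [Set.uIoc_of_le hab.le]
  · exact (ae_restrict_iff' measurableSet_uIoc).2
      (Filter.Eventually.of_forall fun t ht => he_nonneg t (hIoc ht))

theorem mul_integral_le_of_energy_inequality {e w : ℝ → ℝ} {ν F a b : ℝ} (hab : a ≤ b)
    (he : ContinuousOn e (Set.Icc a b)) (he_diff : ∀ t ∈ Set.Ioo a b, DifferentiableAt ℝ e t)
    (hw : IntervalIntegrable w volume a b)
    (henergy : ∀ t ∈ Set.Ioo a b, (1 / 2) * deriv e t ≤ -ν * w t + F * √(e t)) :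
    ν * ∫ t in a..b, w t ≤ F * (∫ t in a..b, √(e t)) + (e a - e b) / 2 := by
  have hsqrt : IntervalIntegrable (fun t => √(e t)) volume a b :=
    (Real.continuous_sqrt.comp_continuousOn he).intervalIntegrable_of_Icc hab
  have hrhs : IntervalIntegrable (fun t => 2 * (-ν * w t + F * √(e t))) volume a b :=
    ((hw.const_mul _).add (hsqrt.const_mul _)).const_mul 2
  have hFTC : e b - e a ≤ ∫ t in a..b, 2 * (-ν * w t + F * √(e t)) :=
    intervalIntegral.sub_le_integral_of_hasDeriv_right_of_le hab he
      (fun t ht => (he_diff t ht).hasDerivAt.hasDerivWithinAt)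
      ((intervalIntegrable_iff_integrableOn_Icc_of_le hab).1 hrhs)
      (fun t ht => by linarith [henergy t ht])
  rw [intervalIntegral.integral_const_mul, intervalIntegral.integral_add (hw.const_mul _)
    (hsqrt.const_mul _), intervalIntegral.integral_const_mul,
    intervalIntegral.integral_const_mul] at hFTC
  linarith

theorem mul_interval_average_le_of_energy_inequality {e w : ℝ → ℝ} {ν F a b : ℝ} (hab : a < b)
    (he : ContinuousOn e (Set.Icc a b)) (he_diff : ∀ t ∈ Set.Ioo a b, DifferentiableAt ℝ e t)
    (hw : IntervalIntegrable w volume a b)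
    (henergy : ∀ t ∈ Set.Ioo a b, (1 / 2) * deriv e t ≤ -ν * w t + F * √(e t)) :
    ν * ⨍ t in a..b, w t ≤ F * (⨍ t in a..b, √(e t)) + (e a - e b) / (2 * (b - a)) := by
  rw [interval_average_eq, interval_average_eq, smul_eq_mul, smul_eq_mul, mul_comm 2 (b - a),
    ← div_div]
  calc ν * ((b - a)⁻¹ * ∫ t in a..b, w t) = (b - a)⁻¹ * (ν * ∫ t in a..b, w t) := by ring
    _ ≤ (b - a)⁻¹ * (F * (∫ t in a..b, √(e t)) + (e a - e b) / 2) :=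
      mul_le_mul_of_nonneg_left
        (mul_integral_le_of_energy_inequality hab.le he he_diff hw henergy)
        (inv_nonneg.2 (sub_nonneg.2 hab.le))
    _ = _ := by ring

theorem sq_mul_grashof_mul_reynolds {ν L : ℝ} (hν : ν ≠ 0) (hL : 0 < L) (x f U : ℝ) :
    (ν * L ^ (-2 : ℝ)) ^ 2 * (L ^ 3 * (x * f) * ν⁻¹ ^ 2) * (U * L * ν⁻¹) = x * f * U / ν := by
  rw [show (-2 : ℝ) = -((2 : ℕ) : ℝ) by norm_num, Real.rpow_neg hL.le, Real.rpow_natCast]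
  field_simp

theorem rpow_neg_three_halves {L : ℝ} (hL : 0 ≤ L) : L ^ (-(3 : ℝ) / 2) = (√(L ^ 3))⁻¹ := by
  rw [Real.sqrt_eq_rpow, ← Real.rpow_natCast, ← Real.rpow_mul hL, neg_div, Real.rpow_neg hL]
  norm_num

theorem stmt_5_general (ν L T : ℝ) (hν : 0 < ν) (hL : 0 < L) (hT : 0 < T)
    (f_norm : ℝ) (hf : 0 ≤ f_norm)
    (e w : ℝ → ℝ)
    (henn : ∀ t ∈ Set.Icc (0 : ℝ) T, 0 ≤ e t)
    (hecont : ContinuousOn e (Set.Icc 0 T))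
    (hediff : ∀ t ∈ Set.Ioo (0 : ℝ) T, DifferentiableAt ℝ e t)
    (hwint : IntervalIntegrable w volume 0 T)
    (hineq : ∀ t ∈ Set.Ioo (0 : ℝ) T,
      (1 / 2) * deriv e t ≤ -ν * w t + f_norm * Real.sqrt (e t))
    (U₀ f_rms Gr Re ϖ₀ : ℝ) (hU₀ : 0 ≤ U₀)
    (hU₀sq : U₀ ^ 2 = L ^ (-3 : ℝ) * ((1 / T) * ∫ t in (0 : ℝ)..T, e t))
    (hfrms : f_rms = L ^ (-(3 : ℝ) / 2) * f_norm)
    (hGr : Gr = L ^ 3 * f_rms * ν⁻¹ ^ 2)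
    (hRe : Re = U₀ * L * ν⁻¹)
    (hϖ₀ : ϖ₀ = ν * L ^ (-2 : ℝ)) :
    L ^ (-3 : ℝ) * ((1 / T) * ∫ t in (0 : ℝ)..T, w t) ≤
      ϖ₀ ^ 2 * Gr * Re + e 0 / (2 * ν * L ^ 3 * T) := by
  have havg (g : ℝ → ℝ) : (1 / T) * ∫ t in (0 : ℝ)..T, g t = ⨍ t in (0 : ℝ)..T, g t := by
    rw [interval_average_eq, sub_zero, smul_eq_mul, one_div]
  rw [havg] at hU₀sq ⊢
  obtain ⟨s, hs, hLs⟩ : ∃ s, 0 < s ∧ L ^ 3 = s ^ 2 :=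
    ⟨√(L ^ 3), by positivity, (Real.sq_sqrt (by positivity)).symm⟩
  have hL3 : L ^ (-3 : ℝ) = (s ^ 2)⁻¹ := by
    rw [← hLs, show (-3 : ℝ) = -((3 : ℕ) : ℝ) by norm_num,
      Real.rpow_neg hL.le, Real.rpow_natCast]
  have hmean_e : ⨍ t in (0 : ℝ)..T, e t = (s * U₀) ^ 2 := by
    rw [hL3] at hU₀sq
    field_simp at hU₀sq ⊢
    linarith
  have hmean_sqrt : ⨍ t in (0 : ℝ)..T, √(e t) ≤ s * U₀ :=
    (interval_average_sqrt_le hT hecont henn).trans_eq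
      (by rw [hmean_e, Real.sqrt_sq (by positivity)])
  have hmean_w := mul_interval_average_le_of_energy_inequality hT hecont hediff hwint hineq
  rw [hGr, hRe, hϖ₀, hfrms, sq_mul_grashof_mul_reynolds hν.ne' hL, rpow_neg_three_halves hL.le,
    hL3, hLs, Real.sqrt_sq hs.le]
  calc (s ^ 2)⁻¹ * ⨍ t in (0 : ℝ)..T, w t
      ≤ (s ^ 2)⁻¹ * ((f_norm * (s * U₀) + e 0 / (2 * T)) / ν) := by
        gcongr
        rw [le_div_iff₀ hν, mul_comm]
        rw [sub_zero, sub_div] at hmean_w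
        have heT : 0 ≤ e T / (2 * T) := div_nonneg (henn T ⟨hT.le, le_rfl⟩) (by positivity)
        linarith [mul_le_mul_of_nonneg_left hmean_sqrt hf]
    _ = s⁻¹ * f_norm * U₀ / ν + e 0 / (2 * ν * s ^ 2 * T) := by
        field_simp

/-- Inequality (8) of the paper, `⟨Ω₁²⟩_T ≤ ϖ₀² Gr Re + O(T⁻¹)`, with the
time-dependent norms abstracted: `e(t)` stands for `‖u(t)‖₂²`, `w(t)` for
`‖ω(t)‖₂²`, and `f_norm` for `‖f‖₂`. -/
theorem stmt_5 (ν L T : ℝ) (hν : 0 < ν) (hL : 0 < L) (hT : 0 < T)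
    (f_norm : ℝ) (hf : 0 ≤ f_norm)
    (e w : ℝ → ℝ)
    (henn : ∀ t ∈ Set.Icc (0 : ℝ) T, 0 ≤ e t)
    (hwnn : ∀ t ∈ Set.Icc (0 : ℝ) T, 0 ≤ w t)
    (hecont : ContinuousOn e (Set.Icc 0 T))
    (hediff : ∀ t ∈ Set.Ioo (0 : ℝ) T, DifferentiableAt ℝ e t)
    (hwint : IntervalIntegrable w volume 0 T)
    (hineq : ∀ t ∈ Set.Ioo (0 : ℝ) T,
      (1 / 2) * deriv e t ≤ -ν * w t + f_norm * Real.sqrt (e t))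
    (U₀ f_rms Gr Re ϖ₀ : ℝ) (hU₀ : 0 ≤ U₀)
    (hU₀sq : U₀ ^ 2 = L ^ (-3 : ℝ) * ((1 / T) * ∫ t in (0 : ℝ)..T, e t))
    (hfrms : f_rms = L ^ (-(3 : ℝ) / 2) * f_norm)
    (hGr : Gr = L ^ 3 * f_rms * ν⁻¹ ^ 2)
    (hRe : Re = U₀ * L * ν⁻¹)
    (hϖ₀ : ϖ₀ = ν * L ^ (-2 : ℝ)) :
    L ^ (-3 : ℝ) * ((1 / T) * ∫ t in (0 : ℝ)..T, w t) ≤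
      ϖ₀ ^ 2 * Gr * Re + e 0 / (2 * ν * L ^ 3 * T) :=
  stmt_5_general ν L T hν hL hT f_norm hf e w henn hecont hediff hwint hineq U₀ f_rms Gr Re ϖ₀ hU₀
    hU₀sq hfrms hGr hRe hϖ₀
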